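/- arXiv:2410.04165 — 2 statements merged into one kernel-verified Lean document; each statement's English description precedes it below -/
import Mathlib

section
/- Let C be a bivariate copula and define C^lambda(u1,u2) = (1/2)[ C(2u1, 2u2) + C(2(u1-1/2), 2(u2-1/2)) ] on [0,1]^2, where C is extended to R^2 by clamping arguments to [0,1]. If C^lambda = C, then C is the comonotonicity copula M(u1,u2) = min(u1,u2). -/
open MeasureTheory

/-- Joint cdf of a bivariate probability measure. -/
noncomputable def jointCDF2 (μ : Measure (ℝ × ℝ)) (y1 y2 : ℝ) : ℝ :=
  (μ (Set.Iic y1 ×ˢ Set.Iic y2)).toReal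

/-- First marginal cdf. -/
noncomputable def marg1CDF (μ : Measure (ℝ × ℝ)) (y : ℝ) : ℝ :=
  (μ.map Prod.fst (Set.Iic y)).toReal

/-- Second marginal cdf. -/
noncomputable def marg2CDF (μ : Measure (ℝ × ℝ)) (y : ℝ) : ℝ :=
  (μ.map Prod.snd (Set.Iic y)).toReal

/-- A bivariate copula: grounded, uniform marginals, 2-increasing on `[0,1]²`. -/
structure IsCopula2 (C : ℝ → ℝ → ℝ) : Prop where
  grounded1 : ∀ u ∈ Set.Icc (0 : ℝ) 1, C 0 u = 0
  grounded2 : ∀ u ∈ Set.Icc (0 : ℝ) 1, C u 0 = 0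
  marg1 : ∀ u ∈ Set.Icc (0 : ℝ) 1, C u 1 = u
  marg2 : ∀ u ∈ Set.Icc (0 : ℝ) 1, C 1 u = u
  rect : ∀ u1 u2 v1 v2 : ℝ, 0 ≤ u1 → u1 ≤ u2 → u2 ≤ 1 → 0 ≤ v1 → v1 ≤ v2 → v2 ≤ 1 →
    0 ≤ C u2 v2 - C u2 v1 - C u1 v2 + C u1 v1

/-- Sklar's equation: `C` is a copula of `μ`. -/
def SklarEq2 (μ : Measure (ℝ × ℝ)) (C : ℝ → ℝ → ℝ) : Prop :=
  ∀ y1 y2 : ℝ, jointCDF2 μ y1 y2 = C (marg1CDF μ y1) (marg2CDF μ y2)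

/-- Extension of a copula to `ℝ²` by clamping the arguments to `[0,1]`. -/
def clampC (C : ℝ → ℝ → ℝ) (x1 x2 : ℝ) : ℝ :=
  C (min (max x1 0) 1) (min (max x2 0) 1)

/-- The mixture copula $C^\lambda$. -/
noncomputable def halfMix (C : ℝ → ℝ → ℝ) (u1 u2 : ℝ) : ℝ :=
  (1 / 2) * (clampC C (2 * u1) (2 * u2) +
    clampC C (2 * (u1 - 1 / 2)) (2 * (u2 - 1 / 2)))

lemma clamp_id (x : ℝ) (hx : x ∈ Set.Icc (0:ℝ) 1) : min (max x 0) 1 = x := by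
  rw [max_eq_left hx.1, min_eq_left hx.2]

lemma clamp_lo (x : ℝ) (hx : x ≤ 0) : min (max x 0) 1 = 0 := by
  rw [max_eq_right hx, min_eq_left zero_le_one]

lemma clamp_hi (x : ℝ) (hx : 1 ≤ x) : min (max x 0) 1 = 1 := by
  rw [max_eq_left (le_trans zero_le_one hx), min_eq_right hx]

lemma clamp_mem (x : ℝ) : min (max x 0) 1 ∈ Set.Icc (0:ℝ) 1 :=
  ⟨le_min (le_max_right _ _) zero_le_one, min_le_right _ _⟩

lemma copula_nonneg (C : ℝ → ℝ → ℝ) (hC : IsCopula2 C)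
    {u1 u2 : ℝ} (h1 : u1 ∈ Set.Icc (0:ℝ) 1) (h2 : u2 ∈ Set.Icc (0:ℝ) 1) :
    0 ≤ C u1 u2 := by
  have := hC.rect 0 u1 0 u2 le_rfl h1.1 h1.2 le_rfl h2.1 h2.2
  have e1 := hC.grounded2 u1 h1
  have e2 := hC.grounded1 u2 h2
  have e3 := hC.grounded1 0 ⟨le_rfl, zero_le_one⟩
  linarith

lemma copula_le_min (C : ℝ → ℝ → ℝ) (hC : IsCopula2 C)
    {u1 u2 : ℝ} (h1 : u1 ∈ Set.Icc (0:ℝ) 1) (h2 : u2 ∈ Set.Icc (0:ℝ) 1) :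
    C u1 u2 ≤ min u1 u2 := by
  refine le_min ?_ ?_
  · have := hC.rect 0 u1 u2 1 le_rfl h1.1 h1.2 h2.1 h2.2 le_rfl
    have e1 := hC.marg1 u1 h1
    have e2 := hC.grounded1 1 ⟨zero_le_one, le_rfl⟩
    have e3 := hC.grounded1 u2 h2
    linarith
  · have := hC.rect u1 1 0 u2 h1.1 h1.2 le_rfl le_rfl h2.1 h2.2
    have e1 := hC.marg2 u2 h2
    have e2 := hC.grounded2 1 ⟨zero_le_one, le_rfl⟩
    have e3 := hC.grounded2 u1 h1
    linarith

lemma halfMix_key (C : ℝ → ℝ → ℝ) (hC : IsCopula2 C)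
    (heq : ∀ u1 ∈ Set.Icc (0 : ℝ) 1, ∀ u2 ∈ Set.Icc (0 : ℝ) 1,
      halfMix C u1 u2 = C u1 u2) :
    ∀ n : ℕ, ∀ u1 ∈ Set.Icc (0 : ℝ) 1, ∀ u2 ∈ Set.Icc (0 : ℝ) 1,
      |C u1 u2 - min u1 u2| ≤ (1/2 : ℝ) ^ n := by
  intro n
  induction n with
  | zero =>
    intro u1 h1 u2 h2
    have hle := copula_le_min C hC h1 h2
    have hge := copula_nonneg C hC h1 h2
    have hmin : min u1 u2 ≤ 1 := le_trans (min_le_left _ _) h1.2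
    rw [abs_le, pow_zero]
    constructor <;> linarith
  | succ n ih =>
    intro u1 h1 u2 h2
    have hfix := heq u1 h1 u2 h2
    rw [halfMix] at hfix
    rcases le_or_gt u1 (1/2) with hu1 | hu1 <;> rcases le_or_gt u2 (1/2) with hu2 | hu2
    · -- both ≤ 1/2
      have m1 : 2*u1 ∈ Set.Icc (0:ℝ) 1 := ⟨by linarith [h1.1], by linarith⟩
      have m2 : 2*u2 ∈ Set.Icc (0:ℝ) 1 := ⟨by linarith [h2.1], by linarith⟩
      rw [clampC, clampC, clamp_id _ m1, clamp_id _ m2,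
        clamp_lo (2*(u1-1/2)) (by linarith),
        hC.grounded1 _ (clamp_mem _)] at hfix
      have hmin : min u1 u2 = 1/2 * min (2*u1) (2*u2) := by
        rcases le_total u1 u2 with h | h
        · rw [min_eq_left h, min_eq_left (by linarith)]; ring
        · rw [min_eq_right h, min_eq_right (by linarith)]; ring
      have hrec := ih (2*u1) m1 (2*u2) m2
      have : C u1 u2 - min u1 u2 = 1/2 * (C (2*u1) (2*u2) - min (2*u1) (2*u2)) := by
        rw [hmin, ← hfix]; ring
      rw [this, abs_mul, abs_of_nonneg (by norm_num : (0:ℝ) ≤ 1/2), pow_succ]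
      calc 1/2 * |C (2*u1) (2*u2) - min (2*u1) (2*u2)| ≤ 1/2 * (1/2:ℝ)^n := by
            exact mul_le_mul_of_nonneg_left hrec (by norm_num)
        _ = (1/2:ℝ)^n * (1/2) := by ring
    · -- u1 ≤ 1/2 < u2
      have m1 : 2*u1 ∈ Set.Icc (0:ℝ) 1 := ⟨by linarith [h1.1], by linarith⟩
      rw [clampC, clampC, clamp_id _ m1, clamp_hi (2*u2) (by linarith),
        hC.marg1 _ m1, clamp_lo (2*(u1-1/2)) (by linarith),
        hC.grounded1 _ (clamp_mem _)] at hfix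
      have hmin : min u1 u2 = u1 := min_eq_left (by linarith)
      rw [hmin, ← hfix]
      have : (1/2 : ℝ) * (2*u1 + 0) - u1 = 0 := by ring
      rw [this, abs_zero]
      positivity
    · -- u2 ≤ 1/2 < u1
      have m2 : 2*u2 ∈ Set.Icc (0:ℝ) 1 := ⟨by linarith [h2.1], by linarith⟩
      rw [clampC, clampC, clamp_id _ m2, clamp_hi (2*u1) (by linarith),
        hC.marg2 _ m2, clamp_lo (2*(u2-1/2)) (by linarith),
        hC.grounded2 _ (clamp_mem _)] at hfix
      have hmin : min u1 u2 = u2 := min_eq_right (by linarith)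
      rw [hmin, ← hfix]
      have : (1/2 : ℝ) * (2*u2 + 0) - u2 = 0 := by ring
      rw [this, abs_zero]
      positivity
    · -- both > 1/2
      have m1 : 2*u1-1 ∈ Set.Icc (0:ℝ) 1 := ⟨by linarith, by linarith [h1.2]⟩
      have m2 : 2*u2-1 ∈ Set.Icc (0:ℝ) 1 := ⟨by linarith, by linarith [h2.2]⟩
      have e1 : (2:ℝ)*(u1-1/2) = 2*u1-1 := by ring
      have e2 : (2:ℝ)*(u2-1/2) = 2*u2-1 := by ring
      rw [clampC, clampC, clamp_hi (2*u1) (by linarith), clamp_hi (2*u2) (by linarith),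
        hC.marg1 1 ⟨zero_le_one, le_rfl⟩, e1, e2, clamp_id _ m1, clamp_id _ m2] at hfix
      have hmin : min u1 u2 = 1/2 * (1 + min (2*u1-1) (2*u2-1)) := by
        rcases le_total u1 u2 with h | h
        · rw [min_eq_left h, min_eq_left (by linarith)]; ring
        · rw [min_eq_right h, min_eq_right (by linarith)]; ring
      have hrec := ih (2*u1-1) m1 (2*u2-1) m2
      have : C u1 u2 - min u1 u2
          = 1/2 * (C (2*u1-1) (2*u2-1) - min (2*u1-1) (2*u2-1)) := by
        rw [hmin, ← hfix]; ring
      rw [this, abs_mul, abs_of_nonneg (by norm_num : (0:ℝ) ≤ 1/2), pow_succ]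
      calc 1/2 * |C (2*u1-1) (2*u2-1) - min (2*u1-1) (2*u2-1)| ≤ 1/2 * (1/2:ℝ)^n :=
            mul_le_mul_of_nonneg_left hrec (by norm_num)
        _ = (1/2:ℝ)^n * (1/2) := by ring

/-- if $C^\lambda = C$ on $[0,1]^2$ then $C$ is the comonotonicity copula. -/
theorem halfMix_fixed_point_is_comonotone
    (C : ℝ → ℝ → ℝ) (hC : IsCopula2 C)
    (heq : ∀ u1 ∈ Set.Icc (0 : ℝ) 1, ∀ u2 ∈ Set.Icc (0 : ℝ) 1,
      halfMix C u1 u2 = C u1 u2) :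
    ∀ u1 ∈ Set.Icc (0 : ℝ) 1, ∀ u2 ∈ Set.Icc (0 : ℝ) 1, C u1 u2 = min u1 u2 := by
  intro u1 h1 u2 h2
  have key := halfMix_key C hC heq
  by_contra hne
  have habs : 0 < |C u1 u2 - min u1 u2| := abs_pos.mpr (sub_ne_zero.mpr hne)
  obtain ⟨n, hn⟩ := exists_pow_lt_of_lt_one habs (by norm_num : (1/2:ℝ) < 1)
  exact absurd (key n u1 h1 u2 h2) (not_le.mpr hn)
end

section
/- The copula functional is not elicitable on the class of bivariate distributions with continuous marginals: there is no scoring function S: C x R^2 -> R (where C denotes the set of bivariate copulas) such that for every bivariate distribution F with continuous marginals and Y ~ F, the expected score E[S(C',Y)] is uniquely minimized over copulas C' at the true copula of F. In particular, the copula functional fails to have convex level sets on this class. -/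
open MeasureTheory

open Set

noncomputable section CopulaAux

/-- clamp cdf of uniform on (0,1] -/
def Fcl (y : ℝ) : ℝ := min (max y 0) 1

/-- cdf of the second marginal -/
def Wcl (y : ℝ) : ℝ := max 0 (min (3*y/2) (min (y/2 + 1/2) 1))

def aFun (u : ℝ) : ℝ := max (4*u/5) ((4*u-1)/3)

def Cpi (u v : ℝ) : ℝ := u * v

def Cnu (u v : ℝ) : ℝ := (aFun u * aFun v + (2*u - aFun u) * (2*v - aFun v)) / 2

lemma Fcl_nonneg (y : ℝ) : 0 ≤ Fcl y := le_min (le_max_right _ _) zero_le_one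
lemma Wcl_nonneg (y : ℝ) : 0 ≤ Wcl y := le_max_left _ _

lemma continuous_Fcl : Continuous Fcl := by unfold Fcl; fun_prop
lemma continuous_Wcl : Continuous Wcl := by unfold Wcl; fun_prop

lemma aFun_mono {u1 u2 : ℝ} (h : u1 ≤ u2) : aFun u1 ≤ aFun u2 :=
  max_le_max (by linarith) (by linarith)

lemma aFun_lip {u1 u2 : ℝ} (h : u1 ≤ u2) : aFun u2 ≤ aFun u1 + 4/3*(u2-u1) := by
  have A1 := le_max_left (4*u1/5) ((4*u1-1)/3)
  have A2 := le_max_right (4*u1/5) ((4*u1-1)/3)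
  exact max_le (by unfold aFun; linarith) (by unfold aFun; linarith)

lemma isCopula_Cpi : IsCopula2 Cpi := by
  constructor <;> intros <;> simp [Cpi] <;> nlinarith

lemma aFun_zero : aFun 0 = 0 := by
  unfold aFun; rw [max_eq_left] <;> norm_num

lemma aFun_one : aFun 1 = 1 := by
  unfold aFun; rw [max_eq_right] <;> norm_num

lemma isCopula_Cnu : IsCopula2 Cnu := by
  constructor
  · intro u _; simp [Cnu, aFun_zero]
  · intro u _; simp [Cnu, aFun_zero]
  · intro u _; simp only [Cnu, aFun_one]; ring
  · intro u _; simp only [Cnu, aFun_one]; ring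
  · intro u1 u2 v1 v2 _ hu _ _ hv _
    have ha1 := aFun_mono hu
    have ha2 := aFun_mono hv
    have hb1 : 0 ≤ (2*u2 - aFun u2) - (2*u1 - aFun u1) := by
      have := aFun_lip hu; linarith
    have hb2 : 0 ≤ (2*v2 - aFun v2) - (2*v1 - aFun v1) := by
      have := aFun_lip hv; linarith
    simp only [Cnu]
    nlinarith [mul_nonneg (sub_nonneg.2 ha1) (sub_nonneg.2 ha2), mul_nonneg hb1 hb2]

lemma Fcl_eval (y : ℝ) :
    (y ≤ 0 → Fcl y = 0) ∧ (0 ≤ y → y ≤ 1 → Fcl y = y) ∧ (1 ≤ y → Fcl y = 1) := by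
  refine ⟨fun h => ?_, fun h h' => ?_, fun h => ?_⟩ <;> unfold Fcl
  · rw [max_eq_right h, min_eq_left zero_le_one]
  · rw [max_eq_left h, min_eq_left h']
  · rw [max_eq_left (by linarith), min_eq_right h]

lemma Wcl_eval (y : ℝ) :
    (y ≤ 0 → Wcl y = 0) ∧ (0 ≤ y → y ≤ 1/2 → Wcl y = 3*y/2) ∧
    (1/2 ≤ y → y ≤ 1 → Wcl y = y/2 + 1/2) ∧ (1 ≤ y → Wcl y = 1) := by
  refine ⟨fun h => ?_, fun h h' => ?_, fun h h' => ?_, fun h => ?_⟩ <;> unfold Wcl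
  · rw [min_eq_left (le_min (by linarith) (by linarith)), max_eq_left (by linarith)]
  · rw [min_eq_left (le_min (by linarith) (by linarith)), max_eq_right (by linarith)]
  · rw [min_eq_left (show y/2 + 1/2 ≤ (1:ℝ) by linarith),
      min_eq_right (show y/2 + 1/2 ≤ 3*y/2 by linarith), max_eq_right (by linarith)]
  · rw [min_eq_right (show (1:ℝ) ≤ y/2 + 1/2 by linarith),
      min_eq_right (show (1:ℝ) ≤ 3*y/2 by linarith), max_eq_right zero_le_one]

lemma key_aH (y : ℝ) : aFun ((Fcl y + Wcl y) / 2) = Fcl y := by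
  obtain ⟨hF0, hF1, hF2⟩ := Fcl_eval y
  obtain ⟨hW0, hW1, hW2, hW3⟩ := Wcl_eval y
  rcases le_total y 0 with h0 | h0
  · rw [hF0 h0, hW0 h0]; norm_num [aFun_zero]
  · rcases le_total y (1/2) with h1 | h1
    · rw [hF1 h0 (by linarith), hW1 h0 h1]
      unfold aFun; rw [max_eq_left (by linarith)]; linarith
    · rcases le_total y 1 with h2 | h2
      · rw [hF1 h0 h2, hW2 h1 h2]
        unfold aFun; rw [max_eq_right (by linarith)]; linarith
      · rw [hF2 h2, hW3 h2]; norm_num [aFun_one]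

end CopulaAux

section Meas

/-- uniform on (0,1] -/
noncomputable def Pm : Measure ℝ := volume.restrict (Ioc 0 1)

noncomputable def wdens : ℝ → ENNReal := fun x =>
  (Ioc (0:ℝ) (1/2)).indicator (fun _ => (3/2 : ENNReal)) x
    + (Ioc (1/2:ℝ) 1).indicator (fun _ => (1/2 : ENNReal)) x

noncomputable def Qm : Measure ℝ := volume.withDensity wdens

lemma Pm_apply {s : Set ℝ} (hs : MeasurableSet s) : Pm s = volume (s ∩ Ioc 0 1) :=
  Measure.restrict_apply hs

lemma Pm_Iic (y : ℝ) : Pm (Iic y) = ENNReal.ofReal (Fcl y) := by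
  rw [Pm_apply measurableSet_Iic]
  have : Iic y ∩ Ioc (0:ℝ) 1 = Ioc 0 (min y 1) := by
    ext x; simp only [mem_inter_iff, mem_Iic, mem_Ioc, lt_min_iff, le_min_iff, mem_Ioc]
    constructor
    · rintro ⟨h1, h2, h3⟩; exact ⟨h2, h1, h3⟩
    · rintro ⟨h1, h2, h3⟩; exact ⟨h2, h1, h3⟩
  rw [this, Real.volume_Ioc]
  rcases le_total y 0 with h | h
  · rw [(Fcl_eval y).1 h, ENNReal.ofReal_zero, ENNReal.ofReal_eq_zero]
    rw [min_eq_left (by linarith : y ≤ (1:ℝ))]; linarith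
  · congr 1
    unfold Fcl; rw [max_eq_left h]; ring
lemma wdens_meas1 : Measurable ((Ioc (0:ℝ) (1/2)).indicator (fun _ => (3/2 : ENNReal))) :=
  measurable_const.indicator measurableSet_Ioc

lemma wdens_meas2 : Measurable ((Ioc (1/2:ℝ) 1).indicator (fun _ => (1/2 : ENNReal))) :=
  measurable_const.indicator measurableSet_Ioc

lemma Qm_apply {s : Set ℝ} (hs : MeasurableSet s) :
    Qm s = 3/2 * volume (Ioc (0:ℝ) (1/2) ∩ s) + 1/2 * volume (Ioc (1/2:ℝ) 1 ∩ s) := by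
  rw [Qm, withDensity_apply _ hs]
  unfold wdens
  rw [lintegral_add_left wdens_meas1]
  rw [lintegral_indicator measurableSet_Ioc, lintegral_indicator measurableSet_Ioc]
  rw [Measure.restrict_restrict measurableSet_Ioc, Measure.restrict_restrict measurableSet_Ioc]
  rw [setLIntegral_const, setLIntegral_const]

lemma Ioc_inter_Iic (a b y : ℝ) : Ioc a b ∩ Iic y = Ioc a (min b y) := by
  ext x
  simp only [mem_inter_iff, mem_Ioc, mem_Iic, le_min_iff]
  tauto

lemma ofReal_half : (1/2:ENNReal) = ENNReal.ofReal (1/2) := by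
  rw [ENNReal.ofReal_div_of_pos (by norm_num)]; norm_num

lemma ofReal_threehalf : (3/2:ENNReal) = ENNReal.ofReal (3/2) := by
  rw [ENNReal.ofReal_div_of_pos (by norm_num)]; norm_num

lemma Qm_Iic (y : ℝ) : Qm (Iic y) = ENNReal.ofReal (Wcl y) := by
  rw [Qm_apply measurableSet_Iic, Ioc_inter_Iic, Ioc_inter_Iic,
    Real.volume_Ioc, Real.volume_Ioc, ofReal_half, ofReal_threehalf,
    ← ENNReal.ofReal_mul (by norm_num), ← ENNReal.ofReal_mul (by norm_num)]
  obtain ⟨hW0, hW1, hW2, hW3⟩ := Wcl_eval y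
  rcases le_total y 0 with h | h
  · rw [hW0 h, min_eq_right (by linarith : y ≤ (1/2:ℝ)), min_eq_right (by linarith : y ≤ (1:ℝ))]
    rw [ENNReal.ofReal_eq_zero.2 (by linarith), ENNReal.ofReal_eq_zero.2 (by linarith),
      ENNReal.ofReal_zero, add_zero]
  · rcases le_total y (1/2) with h1 | h1
    · rw [hW1 h h1, min_eq_right h1, min_eq_right (by linarith : y ≤ (1:ℝ))]
      rw [ENNReal.ofReal_eq_zero.2 (show 1/2*(y-1/2) ≤ 0 by linarith), add_zero]
      congr 1; ring
    · rcases le_total y 1 with h2 | h2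
      · rw [hW2 h1 h2, min_eq_left h1, min_eq_right h2,
          ← ENNReal.ofReal_add (by norm_num) (by linarith)]
        congr 1; ring
      · rw [hW3 h2, min_eq_left h1, min_eq_left h2,
          ← ENNReal.ofReal_add (by norm_num) (by norm_num)]
        congr 1; ring

instance : IsProbabilityMeasure Pm := by
  constructor
  rw [Pm, Measure.restrict_apply_univ, Real.volume_Ioc]
  norm_num

instance : IsProbabilityMeasure Qm := by
  constructor
  rw [Qm_apply MeasurableSet.univ, inter_univ, inter_univ, Real.volume_Ioc, Real.volume_Ioc,
    ofReal_half, ofReal_threehalf, ← ENNReal.ofReal_mul (by norm_num),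
    ← ENNReal.ofReal_mul (by norm_num), ← ENNReal.ofReal_add (by norm_num) (by norm_num)]
  norm_num

noncomputable def mu0 : Measure (ℝ × ℝ) := Pm.prod Pm
noncomputable def mu1 : Measure (ℝ × ℝ) := Qm.prod Qm
noncomputable def nu : Measure (ℝ × ℝ) := (1/2 : ENNReal) • mu0 + (1/2 : ENNReal) • mu1

instance : IsProbabilityMeasure mu0 := by unfold mu0; infer_instance
instance : IsProbabilityMeasure mu1 := by unfold mu1; infer_instance

instance : IsProbabilityMeasure nu := by
  constructor
  rw [nu, Measure.add_apply, Measure.smul_apply, Measure.smul_apply,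
    measure_univ, measure_univ]
  simp only [smul_eq_mul, mul_one]
  rw [ofReal_half, ← ENNReal.ofReal_add (by norm_num) (by norm_num)]
  norm_num

lemma map_fst_mu0 : mu0.map Prod.fst = Pm := by
  rw [mu0, Measure.map_fst_prod, measure_univ, one_smul]
lemma map_snd_mu0 : mu0.map Prod.snd = Pm := by
  rw [mu0, Measure.map_snd_prod, measure_univ, one_smul]
lemma map_fst_mu1 : mu1.map Prod.fst = Qm := by
  rw [mu1, Measure.map_fst_prod, measure_univ, one_smul]
lemma map_snd_mu1 : mu1.map Prod.snd = Qm := by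
  rw [mu1, Measure.map_snd_prod, measure_univ, one_smul]

lemma marg1_mu0 : marg1CDF mu0 = Fcl := by
  funext y
  rw [marg1CDF, map_fst_mu0, Pm_Iic, ENNReal.toReal_ofReal (Fcl_nonneg y)]
lemma marg2_mu0 : marg2CDF mu0 = Fcl := by
  funext y
  rw [marg2CDF, map_snd_mu0, Pm_Iic, ENNReal.toReal_ofReal (Fcl_nonneg y)]
lemma marg1_mu1 : marg1CDF mu1 = Wcl := by
  funext y
  rw [marg1CDF, map_fst_mu1, Qm_Iic, ENNReal.toReal_ofReal (Wcl_nonneg y)]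
lemma marg2_mu1 : marg2CDF mu1 = Wcl := by
  funext y
  rw [marg2CDF, map_snd_mu1, Qm_Iic, ENNReal.toReal_ofReal (Wcl_nonneg y)]

lemma nu_apply (s : Set (ℝ × ℝ)) :
    nu s = 1/2 * mu0 s + 1/2 * mu1 s := by
  rw [nu, Measure.add_apply, Measure.smul_apply, Measure.smul_apply, smul_eq_mul, smul_eq_mul]

lemma map_fst_nu : nu.map Prod.fst = (1/2 : ENNReal) • Pm + (1/2 : ENNReal) • Qm := by
  rw [nu, Measure.map_add _ _ measurable_fst, Measure.map_smul, Measure.map_smul,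
    map_fst_mu0, map_fst_mu1]
lemma map_snd_nu : nu.map Prod.snd = (1/2 : ENNReal) • Pm + (1/2 : ENNReal) • Qm := by
  rw [nu, Measure.map_add _ _ measurable_snd, Measure.map_smul, Measure.map_smul,
    map_snd_mu0, map_snd_mu1]

lemma mix_Iic (y : ℝ) :
    ((1/2 : ENNReal) • Pm + (1/2 : ENNReal) • Qm) (Iic y)
      = ENNReal.ofReal ((Fcl y + Wcl y)/2) := by
  rw [Measure.add_apply, Measure.smul_apply, Measure.smul_apply, Pm_Iic, Qm_Iic,
    smul_eq_mul, smul_eq_mul, ofReal_half,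
    ← ENNReal.ofReal_mul (by norm_num), ← ENNReal.ofReal_mul (by norm_num),
    ← ENNReal.ofReal_add (by have := Fcl_nonneg y; linarith) (by have := Wcl_nonneg y; linarith)]
  congr 1; ring

lemma marg1_nu : marg1CDF nu = fun y => (Fcl y + Wcl y)/2 := by
  funext y
  rw [marg1CDF, map_fst_nu, mix_Iic,
    ENNReal.toReal_ofReal (by have := Fcl_nonneg y; have := Wcl_nonneg y; linarith)]

lemma marg2_nu : marg2CDF nu = fun y => (Fcl y + Wcl y)/2 := by
  funext y
  rw [marg2CDF, map_snd_nu, mix_Iic,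
    ENNReal.toReal_ofReal (by have := Fcl_nonneg y; have := Wcl_nonneg y; linarith)]

lemma joint_mu0 (y1 y2 : ℝ) : jointCDF2 mu0 y1 y2 = Fcl y1 * Fcl y2 := by
  rw [jointCDF2, mu0, Measure.prod_prod, Pm_Iic, Pm_Iic,
    ← ENNReal.ofReal_mul (Fcl_nonneg y1), ENNReal.toReal_ofReal]
  exact mul_nonneg (Fcl_nonneg y1) (Fcl_nonneg y2)

lemma joint_mu1 (y1 y2 : ℝ) : jointCDF2 mu1 y1 y2 = Wcl y1 * Wcl y2 := by
  rw [jointCDF2, mu1, Measure.prod_prod, Qm_Iic, Qm_Iic,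
    ← ENNReal.ofReal_mul (Wcl_nonneg y1), ENNReal.toReal_ofReal]
  exact mul_nonneg (Wcl_nonneg y1) (Wcl_nonneg y2)

lemma joint_nu (y1 y2 : ℝ) :
    jointCDF2 nu y1 y2 = (Fcl y1 * Fcl y2 + Wcl y1 * Wcl y2)/2 := by
  have h0 := mul_nonneg (Fcl_nonneg y1) (Fcl_nonneg y2)
  have h1 := mul_nonneg (Wcl_nonneg y1) (Wcl_nonneg y2)
  rw [jointCDF2, nu_apply, mu0, mu1, Measure.prod_prod, Measure.prod_prod,
    Pm_Iic, Pm_Iic, Qm_Iic, Qm_Iic,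
    ← ENNReal.ofReal_mul (Fcl_nonneg y1), ← ENNReal.ofReal_mul (Wcl_nonneg y1),
    ofReal_half,
    ← ENNReal.ofReal_mul (by norm_num), ← ENNReal.ofReal_mul (by norm_num),
    ← ENNReal.ofReal_add (by positivity) (by positivity),
    ENNReal.toReal_ofReal (by positivity)]
  ring

lemma sklar_mu0 : SklarEq2 mu0 Cpi := by
  intro y1 y2
  rw [joint_mu0, marg1_mu0, marg2_mu0, Cpi]

lemma sklar_mu1 : SklarEq2 mu1 Cpi := by
  intro y1 y2
  rw [joint_mu1, marg1_mu1, marg2_mu1, Cpi]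

lemma sklar_nu : SklarEq2 nu Cnu := by
  intro y1 y2
  rw [joint_nu, marg1_nu, marg2_nu, Cnu]
  simp only
  rw [key_aH y1, key_aH y2]
  ring

lemma ne_numeric : Cnu (5/8) (5/8) ≠ Cpi (5/8) (5/8) := by
  have ha : aFun (5/8) = 1/2 := by
    unfold aFun; norm_num
  rw [Cnu, Cpi, ha]; norm_num

lemma Qm_le : Qm ≤ (3 : ENNReal) • Pm := by
  rw [Measure.le_iff]
  intro s hs
  rw [Qm_apply hs, Measure.smul_apply, smul_eq_mul, Pm_apply hs, inter_comm s]
  have h1 : volume (Ioc (0:ℝ) (1/2) ∩ s) ≤ volume (Ioc (0:ℝ) 1 ∩ s) :=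
    measure_mono (inter_subset_inter_left s (Ioc_subset_Ioc_right (by norm_num)))
  have h2 : volume (Ioc (1/2:ℝ) 1 ∩ s) ≤ volume (Ioc (0:ℝ) 1 ∩ s) :=
    measure_mono (inter_subset_inter_left s (Ioc_subset_Ioc_left (by norm_num)))
  calc 3/2 * volume (Ioc (0:ℝ) (1/2) ∩ s) + 1/2 * volume (Ioc (1/2:ℝ) 1 ∩ s)
      ≤ 3/2 * volume (Ioc (0:ℝ) 1 ∩ s) + 1/2 * volume (Ioc (0:ℝ) 1 ∩ s) := by
        gcongr
    _ ≤ 3 * volume (Ioc (0:ℝ) 1 ∩ s) := by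
        rw [← add_mul]
        gcongr
        rw [ofReal_half, ofReal_threehalf, ← ENNReal.ofReal_add (by norm_num) (by norm_num),
          show ((3:ℝ)/2 + 1/2) = 2 by norm_num, show (3:ENNReal) = ENNReal.ofReal 3 by simp]
        exact ENNReal.ofReal_le_ofReal (by norm_num)

lemma Pm_le : Pm ≤ (2 : ENNReal) • Qm := by
  rw [Measure.le_iff]
  intro s hs
  rw [Measure.smul_apply, smul_eq_mul, Qm_apply hs, Pm_apply hs, inter_comm s]
  have hdisj : Disjoint (Ioc (0:ℝ) (1/2) ∩ s) (Ioc (1/2:ℝ) 1 ∩ s) := by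
    apply Set.disjoint_of_subset inter_subset_left inter_subset_left
    exact Set.Ioc_disjoint_Ioc_of_le le_rfl
  have hunion : (Ioc (0:ℝ) (1/2) ∩ s) ∪ (Ioc (1/2:ℝ) 1 ∩ s) = Ioc (0:ℝ) 1 ∩ s := by
    rw [← union_inter_distrib_right, Set.Ioc_union_Ioc_eq_Ioc (by norm_num) (by norm_num)]
  calc volume (Ioc (0:ℝ) 1 ∩ s)
      = volume ((Ioc (0:ℝ) (1/2) ∩ s) ∪ (Ioc (1/2:ℝ) 1 ∩ s)) := by rw [hunion]
    _ ≤ volume (Ioc (0:ℝ) (1/2) ∩ s) + volume (Ioc (1/2:ℝ) 1 ∩ s) := measure_union_le _ _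
    _ ≤ 3 * volume (Ioc (0:ℝ) (1/2) ∩ s) + volume (Ioc (1/2:ℝ) 1 ∩ s) :=
        add_le_add (le_mul_of_one_le_left zero_le (by norm_num)) le_rfl
    _ = 2 * (3/2 * volume (Ioc (0:ℝ) (1/2) ∩ s) + 1/2 * volume (Ioc (1/2:ℝ) 1 ∩ s)) := by
        have e1 : (2:ENNReal) * (3/2) = 3 := by
          rw [ofReal_threehalf, show (2:ENNReal) = ENNReal.ofReal 2 by simp,
            ← ENNReal.ofReal_mul (by norm_num), show ((2:ℝ) * (3/2)) = 3 by norm_num]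
          simp
        have e2 : (2:ENNReal) * (1/2) = 1 := by
          rw [ofReal_half, show (2:ENNReal) = ENNReal.ofReal 2 by simp,
            ← ENNReal.ofReal_mul (by norm_num), show ((2:ℝ) * (1/2)) = 1 by norm_num]
          simp
        rw [mul_add, ← mul_assoc, ← mul_assoc, e1, e2, one_mul]

lemma prod_le_prod_smul {μ μ' ν ν' : Measure ℝ} [SFinite μ] [SFinite ν]
    [SFinite μ'] [SFinite ν'] (c d : ENNReal)
    (hd : d ≠ ⊤) (h1 : μ ≤ c • μ') (h2 : ν ≤ d • ν') :
    μ.prod ν ≤ (c * d) • (μ'.prod ν') := by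
  rw [Measure.le_iff]
  intro s hs
  rw [Measure.smul_apply, smul_eq_mul, Measure.prod_apply hs, Measure.prod_apply hs]
  calc ∫⁻ x, ν (Prod.mk x ⁻¹' s) ∂μ
      ≤ ∫⁻ x, d * ν' (Prod.mk x ⁻¹' s) ∂(c • μ') := by
        apply lintegral_mono' h1
        intro x
        have := h2 (Prod.mk x ⁻¹' s)
        rwa [Measure.smul_apply, smul_eq_mul] at this
    _ = c * (d * ∫⁻ x, ν' (Prod.mk x ⁻¹' s) ∂μ') := by
        rw [lintegral_smul_measure, lintegral_const_mul' _ _ hd, smul_eq_mul]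
    _ = c * d * ∫⁻ x, ν' (Prod.mk x ⁻¹' s) ∂μ' := by ring

lemma mu1_le : mu1 ≤ (9 : ENNReal) • mu0 := by
  rw [show (9:ENNReal) = 3 * 3 by norm_num]
  exact prod_le_prod_smul 3 3 (by norm_num) Qm_le Qm_le

lemma mu0_le : mu0 ≤ (4 : ENNReal) • mu1 := by
  rw [show (4:ENNReal) = 2 * 2 by norm_num]
  exact prod_le_prod_smul 2 2 (by norm_num) Pm_le Pm_le

lemma int_transfer {h : ℝ × ℝ → ℝ} : Integrable h mu0 ↔ Integrable h mu1 := by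
  constructor
  · intro hi
    exact (hi.smul_measure (by norm_num : (9:ENNReal) ≠ ⊤)).mono_measure mu1_le
  · intro hi
    exact (hi.smul_measure (by norm_num : (4:ENNReal) ≠ ⊤)).mono_measure mu0_le

lemma half_ne_zero' : (1/2 : ENNReal) ≠ 0 := by norm_num
lemma half_ne_top : (1/2 : ENNReal) ≠ ⊤ := by norm_num

lemma int_nu {h : ℝ × ℝ → ℝ} :
    Integrable h nu ↔ Integrable h mu0 ∧ Integrable h mu1 := by
  rw [nu, integrable_add_measure, integrable_smul_measure half_ne_zero' half_ne_top,
    integrable_smul_measure half_ne_zero' half_ne_top]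

lemma toReal_half : (1/2 : ENNReal).toReal = 1/2 := by
  rw [ofReal_half, ENNReal.toReal_ofReal (by norm_num)]

lemma int_split {h : ℝ × ℝ → ℝ} (hi : Integrable h nu) :
    ∫ y, h y ∂nu = (1/2) * ∫ y, h y ∂mu0 + (1/2) * ∫ y, h y ∂mu1 := by
  obtain ⟨hi0, hi1⟩ := int_nu.1 hi
  rw [nu, integral_add_measure
      ((integrable_smul_measure half_ne_zero' half_ne_top).2 hi0)
      ((integrable_smul_measure half_ne_zero' half_ne_top).2 hi1),
    integral_smul_measure, integral_smul_measure, toReal_half, smul_eq_mul, smul_eq_mul]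

end Meas

/-- the copula functional is not elicitable on the class of bivariate
distributions with continuous marginals: no scoring function's expected score is
uniquely minimized at the true copula, for every such distribution. -/
theorem copula_not_elicitable :
    ¬ ∃ S : (ℝ → ℝ → ℝ) → ℝ × ℝ → ℝ,
      ∀ μ : Measure (ℝ × ℝ), IsProbabilityMeasure μ →
        Continuous (marg1CDF μ) → Continuous (marg2CDF μ) →
        ∀ C : ℝ → ℝ → ℝ, IsCopula2 C → SklarEq2 μ C →
          ∀ C' : ℝ → ℝ → ℝ, IsCopula2 C' →
            (¬ ∀ u1 ∈ Set.Icc (0 : ℝ) 1, ∀ u2 ∈ Set.Icc (0 : ℝ) 1,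
              C' u1 u2 = C u1 u2) →
            ∫ y, S C y ∂μ < ∫ y, S C' y ∂μ := by
  rintro ⟨S, hS⟩
  have hmem : (5/8 : ℝ) ∈ Set.Icc (0:ℝ) 1 := ⟨by norm_num, by norm_num⟩
  have ne1 : ¬ ∀ u1 ∈ Set.Icc (0:ℝ) 1, ∀ u2 ∈ Set.Icc (0:ℝ) 1, Cnu u1 u2 = Cpi u1 u2 :=
    fun h => ne_numeric (h _ hmem _ hmem)
  have ne2 : ¬ ∀ u1 ∈ Set.Icc (0:ℝ) 1, ∀ u2 ∈ Set.Icc (0:ℝ) 1, Cpi u1 u2 = Cnu u1 u2 :=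
    fun h => ne_numeric (h _ hmem _ hmem).symm
  have c10 : Continuous (marg1CDF mu0) := by rw [marg1_mu0]; exact continuous_Fcl
  have c20 : Continuous (marg2CDF mu0) := by rw [marg2_mu0]; exact continuous_Fcl
  have c11 : Continuous (marg1CDF mu1) := by rw [marg1_mu1]; exact continuous_Wcl
  have c21 : Continuous (marg2CDF mu1) := by rw [marg2_mu1]; exact continuous_Wcl
  have c1n : Continuous (marg1CDF nu) := by
    rw [marg1_nu]; exact (continuous_Fcl.add continuous_Wcl).div_const 2
  have c2n : Continuous (marg2CDF nu) := by
    rw [marg2_nu]; exact (continuous_Fcl.add continuous_Wcl).div_const 2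
  have h1 : ∫ y, S Cpi y ∂mu0 < ∫ y, S Cnu y ∂mu0 :=
    hS mu0 inferInstance c10 c20 Cpi isCopula_Cpi sklar_mu0 Cnu isCopula_Cnu ne1
  have h2 : ∫ y, S Cpi y ∂mu1 < ∫ y, S Cnu y ∂mu1 :=
    hS mu1 inferInstance c11 c21 Cpi isCopula_Cpi sklar_mu1 Cnu isCopula_Cnu ne1
  have h3 : ∫ y, S Cnu y ∂nu < ∫ y, S Cpi y ∂nu :=
    hS nu inferInstance c1n c2n Cnu isCopula_Cnu sklar_nu Cpi isCopula_Cpi ne2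
  by_cases hf : Integrable (S Cpi) nu <;> by_cases hg : Integrable (S Cnu) nu
  · have e1 := int_split hf
    have e2 := int_split hg
    linarith
  · have hgboth : ¬ Integrable (S Cnu) mu0 ∧ ¬ Integrable (S Cnu) mu1 := by
      rcases not_and_or.1 (fun hc => hg (int_nu.2 hc)) with hc | hc
      · exact ⟨hc, fun hc' => hc (int_transfer.2 hc')⟩
      · exact ⟨fun hc' => hc (int_transfer.1 hc'), hc⟩
    rw [integral_undef hgboth.1] at h1
    rw [integral_undef hgboth.2] at h2
    rw [integral_undef hg] at h3
    have e1 := int_split hf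
    linarith
  · have hfboth : ¬ Integrable (S Cpi) mu0 ∧ ¬ Integrable (S Cpi) mu1 := by
      rcases not_and_or.1 (fun hc => hf (int_nu.2 hc)) with hc | hc
      · exact ⟨hc, fun hc' => hc (int_transfer.2 hc')⟩
      · exact ⟨fun hc' => hc (int_transfer.1 hc'), hc⟩
    rw [integral_undef hfboth.1] at h1
    rw [integral_undef hfboth.2] at h2
    rw [integral_undef hf] at h3
    have e2 := int_split hg
    linarith
  · rw [integral_undef hf, integral_undef hg] at h3
    linarith
end
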